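/- Let A = C*(x₁,…,x_n) be an MF C*-algebra, let π : A → M_N(ℂ) be a unital *-homomorphism, and define τ(a) = τ_N(π(a)). Then τ is an MF-trace on A. Concretely: if Ā_k ∈ M_{m_k}(ℂ)^n satisfy ‖p(Ā_k)‖ → ‖p(x̄)‖ for all *-polynomials p, then the tuples B̄_k = Ā_k ⊕ π(x̄)^{(k m_k)} ∈ M_{m_k(1+kN)}(ℂ)^n satisfy both ‖p(B̄_k)‖ → ‖p(x̄)‖ and τ_{m_k(1+kN)}(p(B̄_k)) → τ(p(x̄)). -/

import Mathlib

/-!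
Pad the microstates with many copies of `π(x̄)`: `B̄_k = Ā_k ⊕ π(x̄)^{(k m_k)}`. A *-polynomial
evaluates blockwise, so `‖p(B̄_k)‖ = max ‖p(Ā_k)‖ ‖π(p(x̄))‖` tends to `‖p(x̄)‖` because `π` is
contractive, and `τ(p(B̄_k)) = ε_k τ(p(Ā_k)) + (1 - ε_k) τ_N(π(p(x̄)))` with `ε_k = (1 + kN)⁻¹ → 0`
and `τ(p(Ā_k))` bounded by `‖p(Ā_k)‖`.
-/

open scoped Matrix.Norms.L2Operator

/-- Evaluation of a noncommutative *-polynomial at a tuple. -/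
noncomputable def evalStarPoly {A : Type*} [Ring A] [Algebra ℂ A] [StarRing A]
    {n : ℕ} (x : Fin n → A) (p : FreeAlgebra ℂ (Fin n × Bool)) : A :=
  FreeAlgebra.lift ℂ (fun q : Fin n × Bool => if q.2 then star (x q.1) else x q.1) p

/-- The MF-trace condition for `τ` relative to a generating tuple `x`. -/
def IsMFTrace {A : Type*} [NormedRing A] [StarRing A] [CStarRing A] [NormedAlgebra ℂ A]
    {n : ℕ} (x : Fin n → A) (τ : A → ℂ) : Prop :=
  ∃ m : ℕ → ℕ, (∀ k, 0 < m k) ∧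
    ∃ Amat : (k : ℕ) → Fin n → Matrix (Fin (m k)) (Fin (m k)) ℂ,
      ∀ p : FreeAlgebra ℂ (Fin n × Bool),
        Filter.Tendsto (fun k => ‖evalStarPoly (Amat k) p‖) Filter.atTop
          (nhds ‖evalStarPoly x p‖) ∧
        Filter.Tendsto (fun k => Matrix.trace (evalStarPoly (Amat k) p) / (m k : ℂ))
          Filter.atTop (nhds (τ (evalStarPoly x p)))

open Filter Topology
open scoped Kronecker

lemma Filter.Tendsto.mul_add_one_sub_mul {ι α : Type*} [NormedRing α] {l : Filter ι}
    {ε u : ι → α} (hε : Tendsto ε l (𝓝 0)) (hu : IsBoundedUnder (· ≤ ·) l (‖u ·‖)) (v : α) :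
    Tendsto (fun k => ε k * u k + (1 - ε k) * v) l (𝓝 v) := by
  simpa using (hε.zero_mul_isBoundedUnder_le hu).add
    (((tendsto_const_nhds (x := (1 : α))).sub hε).mul_const v)

section evalStarPoly

variable {A B : Type*} [Ring A] [Algebra ℂ A] [StarRing A] [Ring B] [Algebra ℂ B] [StarRing B]
  {n : ℕ}

lemma map_evalStarPoly (φ : A →⋆ₐ[ℂ] B) (x : Fin n → A) (p : FreeAlgebra ℂ (Fin n × Bool)) :
    φ (evalStarPoly x p) = evalStarPoly (fun i => φ (x i)) p := by
  have hcomp : (φ : A →ₐ[ℂ] B).comp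
      (FreeAlgebra.lift ℂ fun q : Fin n × Bool => if q.2 then star (x q.1) else x q.1) =
      FreeAlgebra.lift ℂ fun q : Fin n × Bool => if q.2 then star (φ (x q.1)) else φ (x q.1) := by
    ext ⟨i, b⟩
    cases b <;> simp [map_star]
  exact DFunLike.congr_fun hcomp p

lemma evalStarPoly_prodMk (x : Fin n → A) (y : Fin n → B) (p : FreeAlgebra ℂ (Fin n × Bool)) :
    evalStarPoly (fun i => (x i, y i)) p = (evalStarPoly x p, evalStarPoly y p) :=
  Prod.ext (map_evalStarPoly (StarAlgHom.fst ℂ A B) _ p)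
    (map_evalStarPoly (StarAlgHom.snd ℂ A B) _ p)

end evalStarPoly

namespace Matrix

lemma trace_fromBlocks {R m n : Type*} [AddCommMonoid R] [Fintype m] [Fintype n]
    (A : Matrix m m R) (B : Matrix m n R) (C : Matrix n m R) (D : Matrix n n R) :
    trace (fromBlocks A B C D) = trace A + trace D := by
  simp [trace, Fintype.sum_sum_type]

section directSum

variable {R : Type*} [CommSemiring R] [StarRing R]
  {m n o : Type*} [Fintype m] [DecidableEq m] [Fintype n] [DecidableEq n]
  [Fintype o] [DecidableEq o]

variable (R m n o) in
def directSumCopies : Matrix m m R × Matrix n n R →⋆ₐ[R] Matrix (m ⊕ n × o) (m ⊕ n × o) R where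
  toFun ab := fromBlocks ab.1 0 0 (ab.2 ⊗ₖ 1)
  map_one' := by simp [fromBlocks_one]
  map_mul' a b := by simp [fromBlocks_multiply, ← mul_kronecker_mul]
  map_zero' := by simp
  map_add' a b := by simp [fromBlocks_add, add_kronecker]
  commutes' r := by
    simp only [Algebra.algebraMap_eq_smul_one, Prod.smul_fst, Prod.smul_snd, Prod.fst_one,
      Prod.snd_one, smul_kronecker, one_kronecker_one]
    rw [← fromBlocks_one, fromBlocks_smul]
    simp only [smul_zero]
  map_star' ab := by
    simp [star_eq_conjTranspose, fromBlocks_conjTranspose, conjTranspose_kronecker]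

lemma directSumCopies_apply (a : Matrix m m R) (b : Matrix n n R) :
    directSumCopies R m n o (a, b) = fromBlocks a 0 0 (b ⊗ₖ 1) := rfl

lemma directSumCopies_injective [Nonempty o] :
    Function.Injective (directSumCopies R m n o) := by
  rintro ⟨a, b⟩ ⟨a', b'⟩ h
  obtain ⟨ha, -, -, hb⟩ := fromBlocks_inj.1 h
  obtain ⟨j⟩ := ‹Nonempty o›
  refine Prod.ext ha (ext fun i i' => ?_)
  simpa using congr_fun₂ hb (i, j) (i', j)

lemma trace_directSumCopies (a : Matrix m m R) (b : Matrix n n R) :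
    trace (directSumCopies R m n o (a, b)) = trace a + Fintype.card o • trace b := by
  simp [directSumCopies_apply, trace_fromBlocks, trace_kronecker, mul_comm]

end directSum

def reindexStarAlgEquiv {R : Type*} [CommSemiring R] [StarRing R]
    {m n : Type*} [Fintype m] [DecidableEq m] [Fintype n] [DecidableEq n] (e : m ≃ n) :
    Matrix m m R ≃⋆ₐ[R] Matrix n n R :=
  { reindexAlgEquiv R R e with
    map_smul' := (reindexLinearEquiv R R e e).map_smul
    map_star' := fun M => (conjTranspose_submatrix M _ _).symm }

lemma trace_reindex {R m n : Type*} [AddCommMonoid R] [Fintype m] [Fintype n] (e : m ≃ n)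
    (M : Matrix m m R) : trace (reindex e e M) = trace M :=
  Fintype.sum_equiv e.symm _ _ fun _ => rfl

section finDirectSum

variable (R : Type*) [CommSemiring R] [StarRing R] (m N t : ℕ)

def finDirectSumCopies :
    Matrix (Fin m) (Fin m) R × Matrix (Fin N) (Fin N) R →⋆ₐ[R]
      Matrix (Fin (m + N * t)) (Fin (m + N * t)) R :=
  (reindexStarAlgEquiv ((Equiv.sumCongr (.refl _) finProdFinEquiv).trans finSumFinEquiv)
    ).toStarAlgHom.comp (directSumCopies R (Fin m) (Fin N) (Fin t))

variable {R m N t}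

lemma trace_finDirectSumCopies (a : Matrix (Fin m) (Fin m) R) (b : Matrix (Fin N) (Fin N) R) :
    trace (finDirectSumCopies R m N t (a, b)) = trace a + t • trace b := by
  change trace (reindex _ _ (directSumCopies R (Fin m) (Fin N) (Fin t) (a, b))) = _
  rw [trace_reindex, trace_directSumCopies, Fintype.card_fin]

end finDirectSum

section normalizedTrace

variable {K : Type*} [Field K] [CharZero K] [StarRing K] {m N : ℕ}

lemma trace_finDirectSumCopies_div (hm : m ≠ 0) (hN : N ≠ 0) (k : ℕ)
    (a : Matrix (Fin m) (Fin m) K) (b : Matrix (Fin N) (Fin N) K) :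
    trace (finDirectSumCopies K m N (k * m) (a, b)) / (m + N * (k * m) : ℕ) =
      ((1 + k * N : ℕ) : K)⁻¹ * (trace a / m) +
        (1 - ((1 + k * N : ℕ) : K)⁻¹) * (trace b / N) := by
  have hden : ((1 + k * N : ℕ) : K) ≠ 0 := Nat.cast_ne_zero.2 (by omega)
  rw [trace_finDirectSumCopies, nsmul_eq_mul]
  push_cast at hden ⊢
  field_simp
  ring

end normalizedTrace

section l2OpNorm

variable {𝕜 : Type*} [RCLike 𝕜] {m n : Type*} [Fintype m] [Fintype n]

lemma norm_entry_le_l2_opNorm [DecidableEq n] (M : Matrix m n 𝕜) (i : m) (j : n) :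
    ‖M i j‖ ≤ ‖M‖ := by
  have h := l2_opNorm_mulVec M (EuclideanSpace.single j 1)
  rw [PiLp.norm_single, norm_one, mul_one] at h
  refine le_trans (le_of_eq ?_) ((PiLp.norm_apply_le _ i).trans h)
  simp [mulVec_single]

lemma norm_trace_le_card_mul_l2_opNorm [DecidableEq n] (M : Matrix n n 𝕜) :
    ‖trace M‖ ≤ Fintype.card n * ‖M‖ :=
  calc ‖trace M‖ ≤ ∑ i, ‖M i i‖ := norm_sum_le _ _
    _ ≤ ∑ _i : n, ‖M‖ := Finset.sum_le_sum fun i _ => norm_entry_le_l2_opNorm M i i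
    _ = Fintype.card n * ‖M‖ := by simp

lemma norm_finDirectSumCopies {m N t : ℕ} (ht : 0 < t) (a : Matrix (Fin m) (Fin m) ℂ)
    (b : Matrix (Fin N) (Fin N) ℂ) :
    ‖finDirectSumCopies ℂ m N t (a, b)‖ = max ‖a‖ ‖b‖ := by
  have : Nonempty (Fin t) := ⟨⟨0, ht⟩⟩
  have hinj : Function.Injective (finDirectSumCopies ℂ m N t) :=
    (EquivLike.injective (reindexStarAlgEquiv _)).comp
      (directSumCopies_injective (R := ℂ) (m := Fin m) (n := Fin N) (o := Fin t))
  exact NonUnitalStarAlgHom.norm_map _ hinj (a, b)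

end l2OpNorm

section limits

variable {N : ℕ}

lemma tendsto_trace_finDirectSumCopies_div {m : ℕ → ℕ} (hm : ∀ k, 0 < m k) (hN : N ≠ 0)
    {a : (k : ℕ) → Matrix (Fin (m k)) (Fin (m k)) ℂ}
    (ha : IsBoundedUnder (· ≤ ·) atTop (‖a ·‖)) (b : Matrix (Fin N) (Fin N) ℂ) :
    Tendsto (fun k => trace (finDirectSumCopies ℂ (m k) N (k * m k) (a k, b)) /
      (m k + N * (k * m k) : ℕ)) atTop (𝓝 (trace b / N)) := by
  simp only [trace_finDirectSumCopies_div (hm _).ne' hN]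
  refine Tendsto.mul_add_one_sub_mul ?_ (ha.mono_le (Eventually.of_forall fun k => ?_)) _
  · exact tendsto_inv_atTop_nhds_zero_nat.comp
      (tendsto_atTop_mono (fun k => (Nat.le_mul_of_pos_right k (Nat.pos_of_ne_zero hN)).trans
        (Nat.le_add_left _ 1)) tendsto_id)
  · dsimp only
    rw [norm_div, div_le_iff₀ (by simpa using hm k), Complex.norm_natCast,
      mul_comm]
    simpa using norm_trace_le_card_mul_l2_opNorm (a k)

lemma tendsto_norm_finDirectSumCopies {m t : ℕ → ℕ} (ht : ∀ᶠ k in atTop, 0 < t k)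
    {a : (k : ℕ) → Matrix (Fin (m k)) (Fin (m k)) ℂ} {L : ℝ}
    (ha : Tendsto (‖a ·‖) atTop (𝓝 L)) {b : Matrix (Fin N) (Fin N) ℂ} (hb : ‖b‖ ≤ L) :
    Tendsto (fun k => ‖finDirectSumCopies ℂ (m k) N (t k) (a k, b)‖) atTop (𝓝 L) := by
  rw [← max_eq_left hb]
  refine (ha.max tendsto_const_nhds).congr' ?_
  filter_upwards [ht] with k hk
  rw [norm_finDirectSumCopies hk]

end limits

end Matrix

theorem stmt11_general {A : Type*}
    [NormedRing A] [StarRing A] [CStarRing A] [NormedAlgebra ℂ A] [CompleteSpace A]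
    [StarModule ℂ A]
    {n : ℕ} (x : Fin n → A)
    (hMF : ∃ m : ℕ → ℕ, (∀ k, 0 < m k) ∧
      ∃ Amat : (k : ℕ) → Fin n → Matrix (Fin (m k)) (Fin (m k)) ℂ,
        ∀ p : FreeAlgebra ℂ (Fin n × Bool),
          Filter.Tendsto (fun k => ‖evalStarPoly (Amat k) p‖) Filter.atTop
            (nhds ‖evalStarPoly x p‖))
    (N : ℕ) (hN : 0 < N) (π : A →⋆ₐ[ℂ] Matrix (Fin N) (Fin N) ℂ) :
    IsMFTrace x (fun a => Matrix.trace (π a) / (N : ℂ)) := by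
  let _ : CStarAlgebra A := { ‹NormedRing A›, ‹StarRing A›, ‹CStarRing A›, ‹NormedAlgebra ℂ A›,
    ‹CompleteSpace A›, ‹StarModule ℂ A› with }
  obtain ⟨m, hm, Amat, hA⟩ := hMF
  let Φ (k : ℕ) := Matrix.finDirectSumCopies ℂ (m k) N (k * m k)
  refine ⟨fun k => m k + N * (k * m k), fun k => Nat.add_pos_left (hm k) _,
    fun k i => Φ k (Amat k i, π (x i)), fun p => ?_⟩
  have heval : ∀ k, evalStarPoly (fun i => Φ k (Amat k i, π (x i))) p =
      Φ k (evalStarPoly (Amat k) p, π (evalStarPoly x p)) := fun k => by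
    rw [← map_evalStarPoly, evalStarPoly_prodMk, map_evalStarPoly]
  simp only [heval]
  refine ⟨Matrix.tendsto_norm_finDirectSumCopies ?_ (hA p)
      (NonUnitalStarAlgHom.norm_apply_le π _),
    Matrix.tendsto_trace_finDirectSumCopies_div hm hN.ne'
      (hA p).isBoundedUnder_le _⟩
  filter_upwards [eventually_gt_atTop 0] with k hk
  exact Nat.mul_pos hk (hm k)

/-- Let `A = C*(x₁,…,x_n)` be an MF C*-algebra (witnessed by matrix
microstates `Ā_k` with `‖p(Ā_k)‖ → ‖p(x̄)‖` for every *-polynomial `p`), let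
`π : A → M_N(ℂ)` be a unital *-homomorphism, and set `τ(a) = τ_N(π(a)) = Tr(π(a))/N`.
Then `τ` is an MF-trace on `A`. -/
theorem stmt11 {A : Type*}
    [NormedRing A] [StarRing A] [CStarRing A] [NormedAlgebra ℂ A] [CompleteSpace A]
    [StarModule ℂ A]
    {n : ℕ} (x : Fin n → A)
    (hgen : (StarAlgebra.adjoin ℂ (Set.range x)).topologicalClosure = ⊤)
    (hMF : ∃ m : ℕ → ℕ, (∀ k, 0 < m k) ∧
      ∃ Amat : (k : ℕ) → Fin n → Matrix (Fin (m k)) (Fin (m k)) ℂ,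
        ∀ p : FreeAlgebra ℂ (Fin n × Bool),
          Filter.Tendsto (fun k => ‖evalStarPoly (Amat k) p‖) Filter.atTop
            (nhds ‖evalStarPoly x p‖))
    (N : ℕ) (hN : 0 < N) (π : A →⋆ₐ[ℂ] Matrix (Fin N) (Fin N) ℂ) :
    IsMFTrace x (fun a => Matrix.trace (π a) / (N : ℂ)) :=
  stmt11_general x hMF N hN π
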